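/- arXiv:2503.07932 — 6 statements merged into one kernel-verified Lean document; each statement's English description precedes it below -/
import Mathlib

section
/- For any base class F ⊆ {0,1}^{ {0,1}* } and generation length T, the growth function of the end-to-end class satisfies Γ_{F^{e2e(T)}}(m) ≤ Γ_F(m · 2^T) for all m. -/
/-- apply-and-append map: `f̄(x) = append(x, f(x))`. -/
def applyAppend (f : List Bool → Bool) (x : List Bool) : List Bool := x ++ [f x]

/-- chain-of-thought map: `f̄` iterated `T` times. -/
def cot (f : List Bool → Bool) (T : ℕ) (x : List Bool) : List Bool :=
  (applyAppend f)^[T] x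

/-- end-to-end map: last token of the chain of thought. -/
def e2e (f : List Bool → Bool) (T : ℕ) (x : List Bool) : Bool :=
  (cot f T x).getLastD false

/-- end-to-end class `F^{e2e(T)}`. -/
def e2eClass (F : Set (List Bool → Bool)) (T : ℕ) : Set (List Bool → Bool) :=
  (fun f => e2e f T) '' F

/-- growth function of a class of `{0,1}`-valued functions on `{0,1}*`:
the maximal number of distinct behavior vectors on `m` points. -/
noncomputable def growth (H : Set (List Bool → Bool)) (m : ℕ) : ℕ :=
  sSup {n | ∃ x : Fin m → List Bool,
    n = Set.ncard ((fun h => fun i => h (x i)) '' H)}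

/-! The chain of thought from `x` only ever queries `f` at the words `x ++ w` with `|w| < T`, and
there are fewer than `2 ^ T` such `w`. So on `m` points the end-to-end behaviour of `f` is a
function of the behaviour of `f` on at most `m * 2 ^ T` points. -/

lemma cot_congr {f g : List Bool → Bool} {T : ℕ} {x : List Bool}
    (h : ∀ w : List Bool, w.length < T → f (x ++ w) = g (x ++ w)) :
    cot f T x = cot g T x := by
  induction T generalizing x with
  | zero => rfl
  | succ T ih =>
    have hx : f x = g x := by simpa using h [] (Nat.succ_pos T)
    simp only [cot, Function.iterate_succ_apply, applyAppend, hx] at ih ⊢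
    refine ih fun w hw => ?_
    simpa using h (g x :: w) (by simpa using hw)

lemma e2e_congr {f g : List Bool → Bool} {T : ℕ} {x : List Bool}
    (h : ∀ w : List Bool, w.length < T → f (x ++ w) = g (x ++ w)) :
    e2e f T x = e2e g T x := by
  rw [e2e, e2e, cot_congr h]

lemma ncard_setOf_length_lt_le (T : ℕ) : {w : List Bool | w.length < T}.ncard ≤ 2 ^ T := by
  induction T with
  | zero => simp
  | succ T ih =>
    have hsplit :
        {w : List Bool | w.length < T + 1} = {w | w.length < T} ∪ {w | w.length = T} := by
      ext w
      simp [Nat.le_iff_lt_or_eq]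
    have hT : {w : List Bool | w.length = T}.ncard = 2 ^ T := by
      change Nat.card (List.Vector Bool T) = 2 ^ T
      rw [Nat.card_eq_fintype_card, card_vector, Fintype.card_bool]
    calc {w : List Bool | w.length < T + 1}.ncard
        ≤ {w : List Bool | w.length < T}.ncard + {w : List Bool | w.length = T}.ncard :=
          hsplit ▸ Set.ncard_union_le _ _
      _ ≤ 2 ^ T + 2 ^ T := by omega
      _ = 2 ^ (T + 1) := by ring

lemma exists_range_subset_range_fin {ι α : Type*} [Finite ι] [Nonempty α] (z : ι → α) {N : ℕ}
    (h : Nat.card ι ≤ N) : ∃ y : Fin N → α, Set.range z ⊆ Set.range y := by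
  let e : ι ↪ Fin N := (Finite.equivFin ι).toEmbedding.trans (Fin.castLEEmb h)
  refine ⟨Function.extend e z fun _ => Classical.arbitrary α, ?_⟩
  rintro _ ⟨i, rfl⟩
  exact ⟨e i, e.injective.extend_apply _ _ _⟩

lemma ncard_image_le_of_factorsThrough {α β γ : Type*} {p : α → β} {q : α → γ}
    (hqp : q.FactorsThrough p) (S : Set α) (hS : (p '' S).Finite) :
    (q '' S).ncard ≤ (p '' S).ncard := by
  obtain rfl | ⟨a, -⟩ := S.eq_empty_or_nonempty
  · simp
  have hq : q '' S = Function.extend p q (fun _ => q a) '' (p '' S) := by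
    rw [Set.image_image]
    exact Set.image_congr fun b _ => (hqp.extend_apply _ b).symm
  rw [hq]
  exact Set.ncard_image_le hS

lemma ncard_le_growth (H : Set (List Bool → Bool)) {m : ℕ} (x : Fin m → List Bool) :
    ((fun h i => h (x i)) '' H).ncard ≤ growth H m := by
  refine le_csSup ⟨Nat.card (Fin m → Bool), ?_⟩ ⟨x, rfl⟩
  rintro _ ⟨z, rfl⟩
  exact Set.ncard_le_card _

/-- `Γ_{F^{e2e(T)}}(m) ≤ Γ_F(m · 2^T)` for all `m`. -/
theorem growth_e2eClass_le (F : Set (List Bool → Bool)) (T : ℕ) (m : ℕ) :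
    growth (e2eClass F T) m ≤ growth F (m * 2 ^ T) := by
  refine csSup_le ⟨_, fun _ => [], rfl⟩ ?_
  rintro _ ⟨x, rfl⟩
  have : Finite {w : List Bool // w.length < T} := (List.finite_length_lt Bool T).to_subtype
  have hcard : Nat.card (Fin m × {w : List Bool // w.length < T}) ≤ m * 2 ^ T := by
    rw [Nat.card_prod, Nat.card_fin]
    exact Nat.mul_le_mul_left m ((Nat.card_coe_set_eq _).trans_le (ncard_setOf_length_lt_le T))
  obtain ⟨y, hy⟩ := exists_range_subset_range_fin (fun p => x p.1 ++ p.2.1) hcard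
  have hfactor : (fun f i => e2e f T (x i)).FactorsThrough
      fun (f : List Bool → Bool) k => f (y k) := by
    intro f g hfg
    funext i
    refine e2e_congr fun w hw => ?_
    obtain ⟨k, hk⟩ := hy ⟨(i, ⟨w, hw⟩), rfl⟩
    simpa [hk] using congrFun hfg k
  rw [e2eClass, Set.image_image]
  exact (ncard_image_le_of_factorsThrough hfactor F (Set.toFinite _)).trans (ncard_le_growth F y)
end

section
/- For any base class F ⊆ {0,1}^{ {0,1}* } and any T ≥ 1, the loss class L^{CoT(T)}(F) = { ℓ_f : z ↦ 1[z ≠ f^{CoT(T)}(x)] where x = z with the last T tokens removed, for f ∈ F } has growth function bounded by Γ_{L^{CoT(T)}(F)}(m) ≤ Γ_F(mT). -/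
/-- The chain-of-thought loss class `L^{CoT(T)}(F)`:
`ℓ_f(z) = 1[z ≠ f^{CoT(T)}(x)]` where `x = z[:−(T+1)]` is `z` with its last `T`
tokens removed. -/
def lossClass (F : Set (List Bool → Bool)) (T : ℕ) : Set (List Bool → Bool) :=
  (fun f => fun z : List Bool => decide (z ≠ cot f T (z.take (z.length - T)))) '' F

lemma cot_succ (f : List Bool → Bool) (T : ℕ) (x : List Bool) :
    cot f (T+1) x = applyAppend f (cot f T x) := by
  simp [cot, Function.iterate_succ_apply']

lemma cot_length (f : List Bool → Bool) (k : ℕ) (x : List Bool) :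
    (cot f k x).length = x.length + k := by
  induction k with
  | zero => simp [cot]
  | succ n ih => rw [cot_succ]; simp [applyAppend, ih]; omega

lemma cot_prefix (f : List Bool → Bool) (k : ℕ) (x : List Bool) : x <+: cot f k x := by
  induction k with
  | zero => simp [cot]
  | succ n ih =>
    rw [cot_succ]
    exact ih.trans (by simpa [applyAppend] using List.prefix_append (cot f n x) [f (cot f n x)])

lemma cot_add (f : List Bool → Bool) (a b : ℕ) (x : List Bool) :
    cot f (a + b) x = cot f b (cot f a x) := by
  rw [cot, cot, cot, add_comm, Function.iterate_add_apply]

lemma cot_take (f : List Bool → Bool) {T k : ℕ} (x z : List Bool) (hk : k ≤ T)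
    (hz : cot f T x = z) : cot f k x = z.take (x.length + k) := by
  have h1 : cot f k x <+: z := by
    rw [← hz, show T = k + (T - k) by omega, cot_add]
    exact cot_prefix ..
  have h2 := List.prefix_iff_eq_take.mp h1
  rwa [cot_length] at h2

lemma cot_eq_of_agree (f g : List Bool → Bool) (T : ℕ) (z : List Bool)
    (h : ∀ t < T, f (z.take (z.length - T + t)) = g (z.take (z.length - T + t)))
    (hf : cot f T (z.take (z.length - T)) = z) :
    cot g T (z.take (z.length - T)) = z := by
  set x := z.take (z.length - T) with hx
  have hxl : x.length = z.length - T := by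
    simp [hx, List.length_take]
  have key : ∀ k ≤ T, cot g k x = cot f k x := by
    intro k hk
    induction k with
    | zero => simp [cot]
    | succ n ih =>
      rw [cot_succ, cot_succ, ih (by omega)]
      have hn : cot f n x = z.take (z.length - T + n) := by
        rw [cot_take f x z (by omega) hf, hxl]
      unfold applyAppend
      rw [hn, h n (by omega)]
  rw [key T le_rfl, hf]

lemma loss_congr (f g : List Bool → Bool) (T : ℕ) (z : List Bool)
    {i1 : Decidable (z ≠ cot f T (z.take (z.length - T)))}
    {i2 : Decidable (z ≠ cot g T (z.take (z.length - T)))}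
    (h : ∀ t < T, f (z.take (z.length - T + t)) = g (z.take (z.length - T + t))) :
    @decide _ i1 = @decide _ i2 := by
  rw [decide_eq_decide]
  constructor
  · intro hne hgz
    exact hne (cot_eq_of_agree g f T z (fun t ht => (h t ht).symm) hgz.symm).symm
  · intro hne hfz
    exact hne (cot_eq_of_agree f g T z h hfz.symm).symm

/-- `Γ_{L^{CoT(T)}(F)}(m) ≤ Γ_F(m·T)` for all `m` and `T ≥ 1`. -/
theorem growth_lossClass_le (F : Set (List Bool → Bool)) (T : ℕ) (hT : 1 ≤ T)
    (m : ℕ) : growth (lossClass F T) m ≤ growth F (m * T) := by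
  classical
  unfold growth
  have hne : {n | ∃ x : Fin m → List Bool,
      n = Set.ncard ((fun h => fun i => h (x i)) '' (lossClass F T))}.Nonempty :=
    ⟨_, ⟨fun _ => [], rfl⟩⟩
  apply csSup_le hne
  rintro n ⟨z, rfl⟩
  set y : Fin (m * T) → List Bool := fun j =>
    (z (finProdFinEquiv.symm j).1).take
      ((z (finProdFinEquiv.symm j).1).length - T + (finProdFinEquiv.symm j).2) with hy
  have hbdd : BddAbove {n | ∃ x : Fin (m * T) → List Bool,
      n = Set.ncard ((fun h => fun i => h (x i)) '' F)} := by
    refine ⟨Nat.card (Fin (m * T) → Bool), ?_⟩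
    rintro n ⟨x, rfl⟩
    rw [← Set.ncard_univ]
    exact Set.ncard_le_ncard (Set.subset_univ _) Set.finite_univ
  refine le_trans ?_ (le_csSup hbdd ⟨y, rfl⟩)
  -- extend a behavior vector to a function
  set fext : (Fin (m * T) → Bool) → (List Bool → Bool) := fun b w =>
    if h : ∃ j, y j = w then b h.choose else false with hfext
  set Φ : (Fin (m * T) → Bool) → (Fin m → Bool) := fun b i =>
    decide (z i ≠ cot (fext b) T ((z i).take ((z i).length - T))) with hΦ
  have hsub : ((fun h => fun i => h (z i)) '' (lossClass F T)) ⊆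
      Φ '' ((fun h => fun i => h (y i)) '' F) := by
    rintro b ⟨ℓ, ⟨f, hfF, rfl⟩, rfl⟩
    refine ⟨fun j => f (y j), ⟨f, hfF, rfl⟩, ?_⟩
    funext i
    have hagree : ∀ t < T, (fext (fun j => f (y j))) ((z i).take ((z i).length - T + t))
        = f ((z i).take ((z i).length - T + t)) := by
      intro t ht
      have hyj : y (finProdFinEquiv (i, ⟨t, ht⟩)) = (z i).take ((z i).length - T + t) := by
        simp only [hy, Equiv.symm_apply_apply]
      rw [← hyj, hfext]
      have hex : ∃ j, y j = y (finProdFinEquiv (i, ⟨t, ht⟩)) := ⟨_, rfl⟩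
      simp only [dif_pos hex]
      exact congrArg f hex.choose_spec
    show Φ (fun j => f (y j)) i = _
    rw [hΦ]
    exact loss_congr (fext (fun j => f (y j))) f T (z i) hagree
  calc ((fun h => fun i => h (z i)) '' (lossClass F T)).ncard
      ≤ (Φ '' ((fun h => fun i => h (y i)) '' F)).ncard :=
        Set.ncard_le_ncard hsub (Set.toFinite _)
    _ ≤ ((fun h => fun i => h (y i)) '' F).ncard := Set.ncard_image_le (Set.toFinite _)
end

section
/- For every positive integer D, there exists a base class F ⊆ {0,1}^{ {0,1}* } with Littlestone dimension exactly D and VC dimension exactly 1, such that for every T > D the end-to-end class F^{e2e(T)} has VC dimension exactly D. -/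
def Shatters {X : Type*} (H : Set (X → Bool)) (d : ℕ) : Prop :=
  ∃ x : Fin d → X, ∀ b : Fin d → Bool, ∃ h ∈ H, ∀ i, h (x i) = b i

/-- Littlestone (online) shattering of a complete binary tree of depth `d`. -/
def LShatters {X : Type*} (F : Set (X → Bool)) (d : ℕ) : Prop :=
  ∃ x : (i : Fin d) → (Fin i.1 → Bool) → X,
    ∀ ε : Fin d → Bool, ∃ f ∈ F, ∀ i : Fin d,
      f (x i (fun j => ε ⟨j.1, j.2.trans i.2⟩)) = ε i

/-!
The generators are thresholds `x ↦ [q x ≤ n]` for one fixed ranking `q` of the strings and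
`n < 2 ^ D`, so the base class has VC dimension at most `1` and at most `2 ^ D` members, which
bounds its Littlestone dimension and the VC dimension of every end-to-end class by `D`. The ranking
sends a prompt `0ⁱ1` followed by `t < D` bits to the midpoint of the numbers below `2 ^ D` with
these leading bits, so a threshold answers with the next bit of `n`: this is binary search, a
Littlestone tree of depth `D`, and on every prompt the chain of thought writes out `n` in `D`
steps. Once all `D` bits are written, `q` sends the string to `0` or `2 ^ D` according to bit `i`,
so after `T > D` steps the last token is bit `i` of `n` and the end-to-end class shatters the `D`
prompts.
-/

lemma le_of_two_pow_le_two_pow {d D : ℕ} (h : (2 : ℕ∞) ^ d ≤ 2 ^ D) : d ≤ D :=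
  (Nat.pow_le_pow_iff_right (by norm_num : 1 < 2)).1 (by exact_mod_cast h)

section Dimensions

variable {X : Type*} {H : Set (X → Bool)} {d : ℕ}

lemma Shatters.two_pow_le_encard (h : Shatters H d) : 2 ^ d ≤ H.encard := by
  obtain ⟨x, hx⟩ := h
  choose m hmH hm using hx
  have hinj : Function.Injective m := fun b b' hbb ↦ funext fun i ↦ by
    rw [← hm b i, ← hm b' i, hbb]
  calc (2 : ℕ∞) ^ d = ENat.card (Fin d → Bool) := by simp
    _ ≤ (Set.range m).encard := hinj.encard_range
    _ ≤ H.encard := Set.encard_le_encard (Set.range_subset_iff.2 hmH)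

lemma LShatters.two_pow_le_encard (h : LShatters H d) : 2 ^ d ≤ H.encard := by
  obtain ⟨x, hx⟩ := h
  choose m hmH hm using hx
  -- Two branches agree up to their first disagreement, where they query the same node.
  have hinj : Function.Injective m := fun ε ε' hεε' ↦ funext fun i ↦ by
    induction i using WellFoundedLT.induction with
    | _ i ih =>
      have hpath : (fun j : Fin i.1 ↦ ε ⟨j.1, j.2.trans i.2⟩) =
          fun j ↦ ε' ⟨j.1, j.2.trans i.2⟩ := funext fun j ↦ ih _ j.2
      rw [← hm ε i, ← hm ε' i, hεε', hpath]
  calc (2 : ℕ∞) ^ d = ENat.card (Fin d → Bool) := by simp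
    _ ≤ (Set.range m).encard := hinj.encard_range
    _ ≤ H.encard := Set.encard_le_encard (Set.range_subset_iff.2 hmH)

lemma Shatters.le_of_encard_le {D : ℕ} (h : Shatters H d) (hH : H.encard ≤ 2 ^ D) : d ≤ D :=
  le_of_two_pow_le_two_pow (h.two_pow_le_encard.trans hH)

lemma LShatters.le_of_encard_le {D : ℕ} (h : LShatters H d) (hH : H.encard ≤ 2 ^ D) : d ≤ D :=
  le_of_two_pow_le_two_pow (h.two_pow_le_encard.trans hH)

lemma LShatters.shatters_one (h : LShatters H d) (hd : 0 < d) : Shatters H 1 := by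
  obtain ⟨x, hx⟩ := h
  refine ⟨fun _ ↦ x ⟨0, hd⟩ Fin.elim0, fun b ↦ ?_⟩
  obtain ⟨f, hf, hroot⟩ := hx fun _ ↦ b 0
  refine ⟨f, hf, fun i ↦ ?_⟩
  rw [Subsingleton.elim i 0, ← hroot ⟨0, hd⟩]
  exact congrArg (fun p ↦ f (x ⟨0, hd⟩ p)) (Subsingleton.elim _ _)

lemma Shatters.le_one_of_subset_range_threshold {α : Type*} [LinearOrder α] (q : X → α)
    (hH : H ⊆ Set.range fun a x ↦ decide (q x ≤ a)) (h : Shatters H d) : d ≤ 1 := by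
  by_contra! hd
  obtain ⟨x, hx⟩ := h
  -- Thresholds cannot label the higher of two points `true` and the lower one `false`.
  obtain ⟨lo, hi, hne, hle⟩ : ∃ lo hi : Fin d, lo ≠ hi ∧ q (x lo) ≤ q (x hi) := by
    rcases le_total (q (x ⟨0, by omega⟩)) (q (x ⟨1, hd⟩)) with h01 | h10
    · exact ⟨_, _, by simp [Fin.ext_iff], h01⟩
    · exact ⟨_, _, by simp [Fin.ext_iff], h10⟩
  obtain ⟨f, hf, hlabel⟩ := hx fun j ↦ decide (j = hi)
  obtain ⟨a, rfl⟩ := hH hf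
  have hlo := hlabel lo
  have hhi := hlabel hi
  simp only [decide_true, decide_eq_true_eq, hne, decide_false, decide_eq_false_iff_not] at hlo hhi
  exact hlo (hle.trans hhi)

lemma Set.encard_range_le_card {ι β : Type*} (f : ι → β) :
    (Set.range f).encard ≤ ENat.card ι := by
  rw [← Set.image_univ, ← Set.encard_univ]
  exact Set.encard_image_le f _

end Dimensions

/-- Big-endian binary value. -/
def binVal (l : List Bool) : ℕ := Nat.ofDigits 2 (l.reverse.map Bool.toNat)

lemma binVal_append (p r : List Bool) : binVal (p ++ r) = binVal p * 2 ^ r.length + binVal r := by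
  simp only [binVal, List.reverse_append, List.map_append, Nat.ofDigits_append, List.length_map,
    List.length_reverse]
  ring

lemma binVal_lt_two_pow (l : List Bool) : binVal l < 2 ^ l.length := by
  simpa [binVal] using Nat.ofDigits_lt_base_pow_length (b := 2) (l := l.reverse.map Bool.toNat)
    (by norm_num) (by simp only [List.mem_map]; rintro _ ⟨b, -, rfl⟩; exact Bool.toNat_lt b)

lemma binVal_singleton (b : Bool) : binVal [b] = b.toNat := by
  simp [binVal]

lemma binVal_cons (b : Bool) (r : List Bool) :
    binVal (b :: r) = b.toNat * 2 ^ r.length + binVal r := by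
  rw [← List.singleton_append, binVal_append, binVal_singleton]

/-- `binVal (p ++ [true]) * 2 ^ r.length` is the midpoint of the numbers with binary prefix `p`. -/
lemma binVal_midpoint_le_iff (p r : List Bool) (b : Bool) :
    binVal (p ++ [true]) * 2 ^ r.length ≤ binVal (p ++ b :: r) ↔ b = true := by
  have hr := binVal_lt_two_pow r
  rw [binVal_append, binVal_append, binVal_cons b r, binVal_singleton]
  cases b <;> simp [pow_succ] <;> nlinarith

section ChainOfThought

variable (f : List Bool → Bool) (x : List Bool)

lemma cot_succ_s7 (t : ℕ) : cot f (t + 1) x = cot f t x ++ [f (cot f t x)] :=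
  Function.iterate_succ_apply' _ _ _

lemma cot_prefix_cot {t t' : ℕ} (h : t ≤ t') : cot f t x <+: cot f t' x := by
  induction h with
  | refl => exact List.prefix_refl _
  | step _ ih => exact ih.trans (by rw [cot_succ_s7]; exact List.prefix_append _ _)

lemma e2e_succ (t : ℕ) : e2e f (t + 1) x = f (cot f t x) := by
  rw [e2e, cot_succ_s7, List.getLastD_concat]

end ChainOfThought

def prompt (i : ℕ) : List Bool := List.replicate i false ++ [true]

lemma findIdx_prompt_append (i : ℕ) (s : List Bool) : (prompt i ++ s).findIdx id = i := by
  induction i with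
  | zero => simp [prompt, List.findIdx_cons]
  | succ i ih => simpa [prompt, List.replicate_succ, List.findIdx_cons] using ih

/-- The ranking of strings behind the thresholds: a string `prompt i ++ s` with fewer than `D`
generated bits `s` is sent to the midpoint of the numbers below `2 ^ D` with binary prefix `s`;
once `D` bits are written it is sent to `0` or to `2 ^ D` according to the `i`-th bit. -/
def query (D : ℕ) (x : List Bool) : ℕ :=
  let i := x.findIdx id
  let s := x.drop (i + 1)
  if s.length < D then binVal (s ++ [true]) * 2 ^ (D - s.length - 1)
  else if s.getD i false then 0 else 2 ^ D

lemma query_prompt_append (D i : ℕ) (s : List Bool) :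
    query D (prompt i ++ s) = if s.length < D then binVal (s ++ [true]) * 2 ^ (D - s.length - 1)
      else if s.getD i false then 0 else 2 ^ D := by
  have hdrop : (prompt i ++ s).drop (i + 1) = s := List.drop_left' (by simp [prompt])
  simp only [query, findIdx_prompt_append, hdrop]

/-- The generator that, run on `prompt i`, writes out the bits of `w` and then repeats `w[i]`. -/
def bitSearch (D : ℕ) (w : List Bool) (x : List Bool) : Bool := decide (query D x ≤ binVal w)

section BitSearch

variable {D : ℕ} {w : List Bool}

lemma bitSearch_prompt_append_take (hw : w.length = D) (i : ℕ) {t : ℕ} (ht : t < D) :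
    bitSearch D w (prompt i ++ w.take t) = w[t] := by
  have htw : t < w.length := hw ▸ ht
  have hsplit : w = w.take t ++ w[t] :: w.drop (t + 1) := by
    rw [List.getElem_cons_drop, List.take_append_drop]
  have hrest : D - t - 1 = (w.drop (t + 1)).length := by simp [hw]; omega
  rw [bitSearch, query_prompt_append, List.length_take_of_le htw.le, if_pos ht, hrest]
  have key := binVal_midpoint_le_iff (w.take t) (w.drop (t + 1)) w[t]
  rw [← hsplit] at key
  simp only [key, Bool.decide_eq_true]

lemma bitSearch_prompt_append_append (hw : w.length = D) {i : ℕ} (hi : i < D) (r : List Bool) :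
    bitSearch D w (prompt i ++ (w ++ r)) = w[i] := by
  have hiw : i < w.length := hw ▸ hi
  have hlen : ¬(w ++ r).length < D := by simp [hw]
  rw [bitSearch, query_prompt_append, if_neg hlen, List.getD_eq_getElem _ _ (by simp; omega),
    List.getElem_append_left hiw]
  cases w[i]
  · simpa [hw] using binVal_lt_two_pow w
  · simp

lemma cot_bitSearch_prompt (hw : w.length = D) (i : ℕ) {t : ℕ} (ht : t ≤ D) :
    cot (bitSearch D w) t (prompt i) = prompt i ++ w.take t := by
  induction t with
  | zero => simp [cot]
  | succ t ih =>
    rw [cot_succ_s7, ih (by omega), bitSearch_prompt_append_take hw i (by omega), List.append_assoc,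
      List.take_append_getElem]

lemma e2e_bitSearch_prompt (hw : w.length = D) {i : ℕ} (hi : i < D) {T : ℕ} (hT : D < T) :
    e2e (bitSearch D w) T (prompt i) = w[i] := by
  obtain ⟨T, rfl⟩ := Nat.exists_eq_add_of_lt hT
  obtain ⟨r, hr⟩ := cot_prefix_cot (bitSearch D w) (prompt i) (Nat.le_add_right D T)
  rw [e2e_succ, ← hr, cot_bitSearch_prompt hw i le_rfl, List.take_of_length_le hw.le,
    List.append_assoc, bitSearch_prompt_append_append hw hi]

end BitSearch

section BaseClass

variable (D : ℕ)

def baseClass : Set (List Bool → Bool) := Set.range fun ε : Fin D → Bool ↦ bitSearch D (List.ofFn ε)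

lemma baseClass_encard_le : (baseClass D).encard ≤ 2 ^ D :=
  (Set.encard_range_le_card _).trans (by simp)

lemma baseClass_subset_range_threshold :
    baseClass D ⊆ Set.range fun a x ↦ decide (query D x ≤ a) :=
  Set.range_subset_iff.2 fun _ ↦ ⟨_, rfl⟩

/-- Binary search: the node reached along `ε'` asks for the next bit after the prefix `ε'`. -/
lemma lShatters_baseClass : LShatters (baseClass D) D := by
  refine ⟨fun i ε' ↦ prompt 0 ++ List.ofFn ε', fun ε ↦ ⟨_, ⟨ε, rfl⟩, fun i ↦ ?_⟩⟩
  have hpath : List.ofFn (fun j : Fin i.1 ↦ ε ⟨j.1, j.2.trans i.2⟩) = (List.ofFn ε).take i :=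
    Fin.ofFn_take_eq_take_ofFn i.2.le ε
  simp only [hpath, bitSearch_prompt_append_take (List.length_ofFn (f := ε)) 0 i.2,
    List.getElem_ofFn]

lemma shatters_e2eClass_baseClass {T : ℕ} (hT : D < T) :
    Shatters (e2eClass (baseClass D) T) D :=
  ⟨fun i ↦ prompt i, fun b ↦ ⟨_, ⟨_, ⟨b, rfl⟩, rfl⟩, fun i ↦ by
    simp only [e2e_bitSearch_prompt (List.length_ofFn (f := b)) i.2 hT, List.getElem_ofFn]⟩⟩

end BaseClass

/-- for every `D ≥ 1` there is a base class `F` with Littlestone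
dimension exactly `D` and VC dimension exactly `1`, such that for every `T > D`
the end-to-end class `F^{e2e(T)}` has VC dimension exactly `D`. -/
theorem exists_baseClass_ldim_vc (D : ℕ) (hD : 0 < D) :
    ∃ F : Set (List Bool → Bool),
      (LShatters F D ∧ ∀ d, LShatters F d → d ≤ D) ∧
      (Shatters F 1 ∧ ∀ d, Shatters F d → d ≤ 1) ∧
      (∀ T, D < T →
        Shatters (e2eClass F T) D ∧ ∀ d, Shatters (e2eClass F T) d → d ≤ D) :=
  ⟨baseClass D,
    ⟨lShatters_baseClass D, fun _ h ↦ h.le_of_encard_le (baseClass_encard_le D)⟩,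
    ⟨(lShatters_baseClass D).shatters_one hD,
      fun _ h ↦ h.le_one_of_subset_range_threshold (query D) (baseClass_subset_range_threshold D)⟩,
    fun _ hT ↦ ⟨shatters_e2eClass_baseClass D hT,
      fun _ h ↦ h.le_of_encard_le ((Set.encard_image_le _ _).trans (baseClass_encard_le D))⟩⟩
end

section
/- For any class F of next-token generators over {0,1} that is obtained from a collection of time-dependent compositions, the growth function of the time-dependent end-to-end class satisfies Γ_{F^{e2e-TD(T)}}(m) ≤ (Γ_F(m))^T, and consequently VCdim(F^{e2e-TD(T)}) ≤ 3·T·VCdim(F)·log₂(2T/ln 2). -/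
/-- Time-dependent chain of thought: apply `f̄_1`, then `f̄_2`, ..., then `f̄_T`
(here `fs t` is `f_{t+1}`). -/
def tdCot (fs : ℕ → (List Bool → Bool)) : ℕ → List Bool → List Bool
  | 0, x => x
  | T + 1, x => applyAppend (fs T) (tdCot fs T x)

/-- The time-dependent end-to-end class `F^{e2e-TD(T)}`: last token of
`f̄_T ∘ ⋯ ∘ f̄_1(x)` for arbitrary `f_1, …, f_T ∈ F`. -/
def tdE2eClass (F : Set (List Bool → Bool)) (T : ℕ) : Set (List Bool → Bool) :=
  {g | ∃ fs : ℕ → (List Bool → Bool), (∀ t, fs t ∈ F) ∧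
    g = fun x => (tdCot fs T x).getLastD false}

/-!
A labeling of `m` inputs by the end-to-end class is read off from the chain-of-thought
trajectories of those inputs. After `t + 1` steps the trajectories are determined by those after
`t` steps together with the labeling that `f_{t+1} ∈ F` gives to these `m` strings, and there are
at most `Γ_F(m)` such labelings; by induction there are at most `Γ_F(m)^T` trajectories.

If the class shatters `d` points, then `2^d ≤ Γ_F(d)^T ≤ (e d / D)^{D T}` by Sauer–Shelah, and
solving `d log 2 ≤ D T log (e d / D)` with `log u ≤ u / e` gives the bound on `d`.
-/

section Labelings

open Finset

variable {X : Type*} {m : ℕ}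

def labelings (H : Set (X → Bool)) (x : Fin m → X) : Set (Fin m → Bool) :=
  (fun h i => h (x i)) '' H

theorem ncard_labelings_le_growth (H : Set (List Bool → Bool)) (x : Fin m → List Bool) :
    (labelings H x).ncard ≤ growth H m := by
  refine le_csSup ⟨2 ^ m, ?_⟩ ⟨x, rfl⟩
  rintro _ ⟨y, rfl⟩
  exact (Set.ncard_le_card (labelings H y)).trans_eq (by simp)

theorem growth_le_of_forall {H : Set (List Bool → Bool)} {n : ℕ}
    (h : ∀ x : Fin m → List Bool, (labelings H x).ncard ≤ n) : growth H m ≤ n :=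
  csSup_le ⟨_, fun _ => [], rfl⟩ (by rintro _ ⟨x, rfl⟩; exact h x)

theorem Shatters.two_pow_le_growth {H : Set (List Bool → Bool)} {d : ℕ} (hH : Shatters H d) :
    2 ^ d ≤ growth H d := by
  obtain ⟨x, hx⟩ := hH
  have h_univ : labelings H x = Set.univ := by
    refine Set.eq_univ_of_forall fun b => ?_
    obtain ⟨h, hH, hb⟩ := hx b
    exact ⟨h, hH, funext hb⟩
  simpa [h_univ] using ncard_labelings_le_growth H x

def positions (b : Fin m → Bool) : Finset (Fin m) := {i | b i}

theorem positions_injective : Function.Injective (positions (m := m)) := fun a b hab =>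
  funext fun i => Bool.eq_iff_iff.2 <| by simpa [positions] using congrArg (i ∈ ·) hab

-- Labelings as subsets of `Fin m`, the form of Mathlib's Sauer–Shelah lemma.
noncomputable def labelingFamily (H : Set (X → Bool)) (x : Fin m → X) : Finset (Finset (Fin m)) :=
  (Set.toFinite (labelings H x)).toFinset.image positions

theorem card_labelingFamily (H : Set (X → Bool)) (x : Fin m → X) :
    #(labelingFamily H x) = (labelings H x).ncard := by
  rw [labelingFamily, card_image_of_injective _ positions_injective,
    Set.ncard_eq_toFinset_card _ (Set.toFinite _)]

theorem shatters_of_shatters_labelingFamily {H : Set (X → Bool)} {x : Fin m → X}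
    {s : Finset (Fin m)} (hs : (labelingFamily H x).Shatters s) : Shatters H #s := by
  let e := s.orderEmbOfFin rfl
  refine ⟨x ∘ e, fun b => ?_⟩
  obtain ⟨u, hu, hsu⟩ := hs (t := ({j | b j} : Finset (Fin #s)).map e.toEmbedding) (by
    intro i hi
    obtain ⟨j, -, rfl⟩ := mem_map.1 hi
    exact s.orderEmbOfFin_mem rfl j)
  obtain ⟨c, hc, rfl⟩ := mem_image.1 hu
  obtain ⟨h, hH, rfl⟩ := (Set.Finite.mem_toFinset _).1 hc
  refine ⟨h, hH, fun j => ?_⟩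
  have he : e j ∈ s := s.orderEmbOfFin_mem rfl j
  simpa [positions, he] using congrArg (e j ∈ ·) hsu

theorem ncard_labelings_le_sum_choose {H : Set (X → Bool)} {D : ℕ}
    (hD : ∀ d, Shatters H d → d ≤ D) (x : Fin m → X) :
    (labelings H x).ncard ≤ ∑ k ∈ Iic D, m.choose k := by
  have h_vcDim : (labelingFamily H x).vcDim ≤ D :=
    Finset.sup_le fun s hs => hD _ (shatters_of_shatters_labelingFamily (mem_shatterer.1 hs))
  calc (labelings H x).ncard = #(labelingFamily H x) := (card_labelingFamily H x).symm
    _ ≤ #(labelingFamily H x).shatterer := card_le_card_shatterer _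
    _ ≤ ∑ k ∈ Iic (labelingFamily H x).vcDim, (Fintype.card (Fin m)).choose k :=
      card_shatterer_le_sum_vcDim
    _ ≤ ∑ k ∈ Iic D, m.choose k := by
      rw [Fintype.card_fin]
      exact sum_le_sum_of_subset (Iic_subset_Iic.2 h_vcDim)

theorem growth_le_sum_choose {H : Set (List Bool → Bool)} {D : ℕ}
    (hD : ∀ d, Shatters H d → d ≤ D) (m : ℕ) : growth H m ≤ ∑ k ∈ Iic D, m.choose k :=
  growth_le_of_forall (ncard_labelings_le_sum_choose hD)

end Labelings

open Finset in
theorem Set.ncard_biUnion_le_ncard_mul {ι α : Type*} {t : Set ι} (ht : t.Finite)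
    (s : ι → Set α) {n : ℕ} (hs : ∀ i ∈ t, (s i).ncard ≤ n) :
    (⋃ i ∈ t, s i).ncard ≤ t.ncard * n := by
  obtain ⟨t, rfl⟩ := ht.exists_finset_coe
  simp only [Set.ncard_coe_finset, Finset.set_biUnion_coe]
  calc (⋃ i ∈ t, s i).ncard ≤ ∑ i ∈ t, (s i).ncard := t.set_ncard_biUnion_le s
    _ ≤ #t * n := by simpa using t.sum_le_card_nsmul _ n hs

section Trajectories

variable (F : Set (List Bool → Bool)) {m : ℕ} (x : Fin m → List Bool)

def trajectories (t : ℕ) : Set (Fin m → List Bool) :=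
  (fun fs i => tdCot fs t (x i)) '' {fs | ∀ t, fs t ∈ F}

theorem trajectories_zero_subset : trajectories F x 0 ⊆ {x} := by
  rintro _ ⟨fs, -, rfl⟩
  rfl

theorem trajectories_succ_subset (t : ℕ) :
    trajectories F x (t + 1) ⊆
      ⋃ y ∈ trajectories F x t, (fun p i => y i ++ [p i]) '' labelings F y := by
  rintro _ ⟨fs, hfs, rfl⟩
  exact Set.mem_biUnion ⟨fs, hfs, rfl⟩ ⟨fun i => fs t (tdCot fs t (x i)), ⟨fs t, hfs t, rfl⟩, rfl⟩

theorem trajectories_finite_and_ncard_le (t : ℕ) :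
    (trajectories F x t).Finite ∧ (trajectories F x t).ncard ≤ growth F m ^ t := by
  induction t with
  | zero =>
    have h_sub := trajectories_zero_subset F x
    exact ⟨(Set.finite_singleton x).subset h_sub,
      (Set.ncard_le_ncard h_sub (Set.finite_singleton x)).trans_eq (Set.ncard_singleton x)⟩
  | succ t ih =>
    obtain ⟨h_fin, h_card⟩ := ih
    have h_union_fin : (⋃ y ∈ trajectories F x t,
        (fun p i => y i ++ [p i]) '' labelings F y).Finite :=
      h_fin.biUnion fun y _ => Set.toFinite _ |>.image _
    refine ⟨h_union_fin.subset (trajectories_succ_subset F x t), ?_⟩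
    calc (trajectories F x (t + 1)).ncard
        ≤ (⋃ y ∈ trajectories F x t, (fun p i => y i ++ [p i]) '' labelings F y).ncard :=
          Set.ncard_le_ncard (trajectories_succ_subset F x t) h_union_fin
      _ ≤ (trajectories F x t).ncard * growth F m :=
          Set.ncard_biUnion_le_ncard_mul h_fin _ fun y _ =>
            (Set.ncard_image_le (Set.toFinite _)).trans (ncard_labelings_le_growth F y)
      _ ≤ growth F m ^ (t + 1) := by
          rw [pow_succ]
          exact Nat.mul_le_mul_right _ h_card

theorem labelings_tdE2eClass_subset (T : ℕ) :
    labelings (tdE2eClass F T) x ⊆ (fun y i => (y i).getLastD false) '' trajectories F x T := by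
  rintro _ ⟨_, ⟨fs, hfs, rfl⟩, rfl⟩
  exact ⟨_, ⟨fs, hfs, rfl⟩, rfl⟩

end Trajectories

theorem growth_tdE2eClass_le (F : Set (List Bool → Bool)) (T m : ℕ) :
    growth (tdE2eClass F T) m ≤ growth F m ^ T := by
  refine growth_le_of_forall fun x => ?_
  obtain ⟨h_fin, h_card⟩ := trajectories_finite_and_ncard_le F x T
  calc (labelings (tdE2eClass F T) x).ncard
      ≤ ((fun y i => (y i).getLastD false) '' trajectories F x T).ncard :=
        Set.ncard_le_ncard (labelings_tdE2eClass_subset F x T) (h_fin.image _)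
    _ ≤ (trajectories F x T).ncard := Set.ncard_image_le h_fin
    _ ≤ growth F m ^ T := h_card

section Bounds

open Finset Real

theorem sum_choose_le_exp_mul_div_pow {D n : ℕ} (hD : 0 < D) (hDn : D ≤ n) :
    ∑ k ∈ Iic D, (n.choose k : ℝ) ≤ (exp 1 * n / D) ^ D := by
  have hn : (0 : ℝ) < n := by exact_mod_cast hD.trans_le hDn
  set r : ℝ := D / n with hr
  have hr0 : 0 < r := by positivity
  have hr1 : r ≤ 1 := div_le_one_of_le₀ (by exact_mod_cast hDn) hn.le
  -- weight the k-th term by `r ^ k ≥ r ^ D` and complete to the binomial sum `(1 + r) ^ n`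
  have h_weighted : r ^ D * ∑ k ∈ Iic D, (n.choose k : ℝ) ≤ exp D :=
    calc r ^ D * ∑ k ∈ Iic D, (n.choose k : ℝ) = ∑ k ∈ Iic D, r ^ D * n.choose k := mul_sum ..
      _ ≤ ∑ k ∈ Iic D, r ^ k * n.choose k :=
        sum_le_sum fun k hk =>
          mul_le_mul_of_nonneg_right (pow_le_pow_of_le_one hr0.le hr1 (mem_Iic.1 hk)) (by positivity)
      _ ≤ ∑ k ∈ range (n + 1), r ^ k * n.choose k :=
        sum_le_sum_of_subset_of_nonneg
          (fun k hk => mem_range.2 (Nat.lt_succ_of_le ((mem_Iic.1 hk).trans hDn)))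
          fun k _ _ => by positivity
      _ = (r + 1) ^ n := by simp [add_pow]
      _ ≤ exp r ^ n := by gcongr; exact add_one_le_exp r
      _ = exp D := by rw [← exp_nat_mul, hr, mul_div_cancel₀ _ hn.ne']
  have h_cancel : (exp 1 * n / D) ^ D * r ^ D = exp D := by
    rw [← mul_pow, show exp 1 * n / D * r = exp 1 by rw [hr]; field_simp, exp_one_pow]
  rw [← h_cancel, mul_comm] at h_weighted
  exact le_of_mul_le_mul_right h_weighted (by positivity)

theorem one_le_logb_two_mul_div_log_two {T : ℝ} (hT : 1 ≤ T) : 1 ≤ logb 2 (2 * T / log 2) := by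
  have h_two : 2 ≤ 2 * T / log 2 := by
    rw [le_div_iff₀ (log_pos one_lt_two)]
    linarith [log_two_lt_d9]
  calc 1 = logb 2 2 := (logb_self_eq_one one_lt_two).symm
    _ ≤ logb 2 (2 * T / log 2) := logb_le_logb_of_le one_lt_two two_pos h_two

theorem le_three_mul_logb_of_mul_log_two_le {T D d : ℝ} (hT : 1 ≤ T) (hD : 0 < D) (hd : 0 < d)
    (h : d * log 2 ≤ D * T * log (exp 1 * d / D)) :
    d ≤ 3 * T * D * logb 2 (2 * T / log 2) := by
  have hT0 : 0 < T := by linarith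
  have hlog2 : 0 < log 2 := log_pos one_lt_two
  have hlogT : 0 ≤ log T := log_nonneg hT
  set a := D * T with ha
  have ha0 : 0 < a := by positivity
  have h_log_le : log (d / a) ≤ d / a / exp 1 := by
    have := log_le_sub_one_of_pos (x := d / a / exp 1) (by positivity)
    rw [log_div (by positivity) (exp_pos 1).ne', log_exp] at this
    linarith
  have h_split : log (exp 1 * d / D) = 1 + log T + log (d / a) := by
    rw [show exp 1 * d / D = exp 1 * (T * (d / a)) by rw [ha]; field_simp,
      log_mul (exp_pos 1).ne' (by positivity), log_mul hT0.ne' (by positivity), log_exp]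
    ring
  have h_lin : d * log 2 ≤ a * (1 + log T) + d / exp 1 :=
    calc d * log 2 ≤ a * log (exp 1 * d / D) := h
      _ = a * (1 + log T) + a * log (d / a) := by rw [h_split]; ring
      _ ≤ a * (1 + log T) + a * (d / a / exp 1) := by gcongr
      _ = a * (1 + log T) + d / exp 1 := by field_simp
  -- `3 / e ≤ 2 log 2` absorbs the term `d / e`
  have h_exp : 3 / exp 1 ≤ 2 * log 2 := by
    rw [div_le_iff₀ (exp_pos 1)]
    nlinarith [exp_one_gt_d9, log_two_gt_d9]
  have h_main : d * log 2 ≤ 3 * a * (1 + log T) := by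
    have : d * (3 / exp 1) ≤ d * (2 * log 2) := by gcongr
    have h_div : d * (3 / exp 1) = 3 * (d / exp 1) := by ring
    linarith
  have h_target : 1 + log T ≤ log (2 * T / log 2) := by
    rw [log_div (by positivity) hlog2.ne', log_mul two_ne_zero hT0.ne']
    linarith [log_le_sub_one_of_pos hlog2]
  rw [logb]
  calc d = d * log 2 / log 2 := by field_simp
    _ ≤ 3 * a * (1 + log T) / log 2 := by gcongr
    _ ≤ 3 * a * log (2 * T / log 2) / log 2 := by gcongr
    _ = 3 * T * D * (log (2 * T / log 2) / log 2) := by rw [ha]; ring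

theorem le_of_two_pow_le_sum_choose_pow {T D d : ℕ} (hT : 1 ≤ T)
    (h : 2 ^ d ≤ (∑ k ∈ Iic D, d.choose k) ^ T) :
    (d : ℝ) ≤ 3 * T * D * logb 2 (2 * T / log 2) := by
  have hT' : (1 : ℝ) ≤ T := by exact_mod_cast hT
  rcases le_or_gt d D with hdD | hDd
  · have hD : (d : ℝ) ≤ D := by exact_mod_cast hdD
    calc (d : ℝ) ≤ 1 * 1 * D * 1 := by linarith
      _ ≤ 3 * T * D * logb 2 (2 * T / log 2) := by
        gcongr
        · linarith
        · exact one_le_logb_two_mul_div_log_two hT'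
  · obtain rfl | hD := Nat.eq_zero_or_pos D
    · rw [show Iic 0 = {0} from rfl, sum_singleton, Nat.choose_zero_right, one_pow] at h
      exact absurd h (Nat.one_lt_two_pow hDd.ne').not_ge
    have h_real : (2 : ℝ) ^ d ≤ (exp 1 * d / D) ^ (D * T) :=
      calc (2 : ℝ) ^ d ≤ (∑ k ∈ Iic D, (d.choose k : ℝ)) ^ T := by exact_mod_cast h
        _ ≤ ((exp 1 * d / D) ^ D) ^ T := by
          gcongr
          exact sum_choose_le_exp_mul_div_pow hD hDd.le
        _ = (exp 1 * d / D) ^ (D * T) := (pow_mul ..).symm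
    have h_log := log_le_log (by positivity) h_real
    rw [log_pow, log_pow] at h_log
    push_cast at h_log
    exact le_three_mul_logb_of_mul_log_two_le hT' (by exact_mod_cast hD)
      (by exact_mod_cast hD.trans hDd) (by linarith)

end Bounds

theorem tdE2e_growth_and_vc_general (F : Set (List Bool → Bool)) (D T : ℕ) (hT : 1 ≤ T)
    (hDmax : ∀ d, Shatters F d → d ≤ D) :
    (∀ m, growth (tdE2eClass F T) m ≤ (growth F m) ^ T) ∧
    (∀ d, Shatters (tdE2eClass F T) d →
      (d : ℝ) ≤ 3 * T * D * Real.logb 2 (2 * T / Real.log 2)) := by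
  refine ⟨growth_tdE2eClass_le F T, fun d hd => le_of_two_pow_le_sum_choose_pow hT ?_⟩
  calc 2 ^ d ≤ growth (tdE2eClass F T) d := hd.two_pow_le_growth
    _ ≤ growth F d ^ T := growth_tdE2eClass_le F T d
    _ ≤ (∑ k ∈ Finset.Iic D, d.choose k) ^ T :=
      Nat.pow_le_pow_left (growth_le_sum_choose hDmax d) T

/-- the growth function of the time-dependent end-to-end class
satisfies `Γ_{F^{e2e-TD(T)}}(m) ≤ (Γ_F(m))^T`, and consequently, if `F` has
finite VC dimension `D`, then `VCdim(F^{e2e-TD(T)}) ≤ 3·T·D·log₂(2T/ln 2)`. -/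
theorem tdE2e_growth_and_vc (F : Set (List Bool → Bool)) (D T : ℕ) (hT : 1 ≤ T)
    (hD : Shatters F D) (hDmax : ∀ d, Shatters F d → d ≤ D) :
    (∀ m, growth (tdE2eClass F T) m ≤ (growth F m) ^ T) ∧
    (∀ d, Shatters (tdE2eClass F T) d →
      (d : ℝ) ≤ 3 * T * D * Real.logb 2 (2 * T / Real.log 2)) :=
  tdE2e_growth_and_vc_general F D T hT hDmax
end

section
/- In the average-hard-attention implementation of the Turing-machine tape lookup, set values v[i] = z[i].symb, queries q[i] = (−npos[i]², npos[i], −1, −1), and keys k[1] = (0,0,0, idx-inv[1]) and k[j] = (2, 4·pos[j], 2·pos[j]², idx-inv[j]) for j > 1, where idx-inv[j] = 1/j. Then the inner products satisfy ⟨q[N], k[1]⟩ = −1 and ⟨q[N], k[j]⟩ = −2(npos[N] − pos[j])² − 1/j for j > 1. Consequently: if some j ≥ 2 with pos[j] = npos[N] exists, the maximum over j ≤ N of ⟨q[N], k[j]⟩ is attained uniquely at the largest such j; otherwise it is attained uniquely at j = 1. -/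
/-- correctness of the average-hard-attention tape lookup.
With `pos j = Σ_{ℓ<j} move_ℓ`, `npos = pos N + move N` (= sum of all moves),
`idx-inv j = 1/j`, values `v[j] = z[j].symb`, query
`q = (−npos², npos, −1, −1)` at the last position, and keys
`k[1] = (0,0,0,idx-inv 1)`, `k[j] = (2, 4·pos j, 2·(pos j)², idx-inv j)` for
`j > 1`, the inner products are `⟨q,k[1]⟩ = −1` and
`⟨q,k[j]⟩ = −2(npos − pos j)² − 1/j`; hence if some `j ≥ 2` has
`pos j = npos`, the maximum of `⟨q,k[j]⟩` over `j ≤ N` is attained uniquely at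
the largest such `j`, and otherwise uniquely at `j = 1`.
(Indices are `0`-based: `Fin N`, with first index `⟨0,hN⟩`.) -/
theorem attention_tape_lookup (N : ℕ) (hN : 0 < N) (mv : Fin N → ℤ) :
    let posF : Fin N → ℤ := fun i => ∑ j ∈ Finset.univ.filter (· < i), mv j
    let nposF : ℤ := ∑ j, mv j
    let iinv : Fin N → ℝ := fun j => 1 / ((j : ℕ) + 1)
    let q : Fin 4 → ℝ := ![-(nposF : ℝ) ^ 2, (nposF : ℝ), -1, -1]
    let k : Fin N → Fin 4 → ℝ := fun j =>
      if j = ⟨0, hN⟩ then ![0, 0, 0, iinv j]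
      else ![2, 4 * (posF j : ℝ), 2 * (posF j : ℝ) ^ 2, iinv j]
    let ip : Fin N → ℝ := fun j => ∑ r : Fin 4, q r * k j r
    (ip ⟨0, hN⟩ = -1) ∧
    (∀ j, j ≠ ⟨0, hN⟩ →
      ip j = -2 * ((nposF : ℝ) - (posF j : ℝ)) ^ 2 - 1 / ((j : ℕ) + 1)) ∧
    (∀ jstar : Fin N, jstar ≠ ⟨0, hN⟩ → posF jstar = nposF →
      (∀ j, j ≠ ⟨0, hN⟩ → posF j = nposF → j ≤ jstar) →
      ∀ j, j ≠ jstar → ip j < ip jstar) ∧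
    ((∀ j, j ≠ ⟨0, hN⟩ → posF j ≠ nposF) →
      ∀ j, j ≠ ⟨0, hN⟩ → ip j < ip ⟨0, hN⟩) := by
  intro posF nposF iinv q k ip
  have hip0 : ip ⟨0, hN⟩ = -1 := by
    simp [ip, k, q, iinv, Fin.sum_univ_four]
  have hipj : ∀ j, j ≠ ⟨0, hN⟩ →
      ip j = -2 * ((nposF : ℝ) - (posF j : ℝ)) ^ 2 - 1 / ((j : ℕ) + 1) := by
    intro j hj
    simp [ip, k, if_neg hj, q, iinv, Fin.sum_univ_four]
    ring
  refine ⟨hip0, hipj, ?_, ?_⟩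
  · intro jstar hjs hpos hmax j hne
    have hjpos : (0:ℝ) < ((jstar : ℕ) : ℝ) + 1 := by positivity
    have hipjs : ip jstar = -(1 / ((jstar : ℕ) + 1)) := by
      rw [hipj jstar hjs, hpos]; ring
    have hjs1 : 1 ≤ (jstar : ℕ) := by
      rcases Nat.pos_of_ne_zero (fun h => hjs (Fin.ext h)) with h
      omega
    have hjs1r : (1:ℝ) ≤ ((jstar : ℕ) : ℝ) := by exact_mod_cast hjs1
    by_cases hj0 : j = ⟨0, hN⟩
    · rw [hj0, hip0, hipjs]
      have h2 : 1 / (((jstar : ℕ) : ℝ) + 1) ≤ 1/2 := by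
        apply div_le_div_of_nonneg_left <;> linarith
      linarith
    · rw [hipj j hj0, hipjs]
      by_cases hpj : posF j = nposF
      · have hle : j ≤ jstar := hmax j hj0 hpj
        have hlt : (j : ℕ) < (jstar : ℕ) := by
          rcases lt_or_eq_of_le hle with h | h
          · exact h
          · exact absurd h hne
        rw [hpj]
        have hc : (((j:ℕ):ℝ)) + 1 < (((jstar:ℕ):ℝ)) + 1 := by
          have : (j:ℕ) + 1 < (jstar:ℕ) + 1 := by omega
          exact_mod_cast this
        have hlt2 : 1 / (((jstar : ℕ) : ℝ) + 1) < 1 / (((j : ℕ) : ℝ) + 1) := by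
          apply div_lt_div_of_pos_left
          · norm_num
          · positivity
          · exact hc
        have hz : (-2:ℝ) * ((nposF:ℝ) - (nposF:ℝ))^2 = 0 := by ring
        linarith
      · have h1 : (1:ℝ) ≤ ((nposF : ℝ) - (posF j : ℝ)) ^ 2 := by
          have hne0 : nposF - posF j ≠ 0 := sub_ne_zero.mpr (fun h => hpj h.symm)
          have h2 : 1 ≤ (nposF - posF j) ^ 2 := by
            rcases hne0.lt_or_gt with h | h <;> nlinarith
          calc (1:ℝ) = ((1:ℤ):ℝ) := by norm_num
            _ ≤ (((nposF - posF j)^2 : ℤ) : ℝ) := by exact_mod_cast h2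
            _ = ((nposF : ℝ) - (posF j : ℝ)) ^ 2 := by push_cast; ring
        have hjp : (0:ℝ) < ((j : ℕ) : ℝ) + 1 := by positivity
        have h3 : 0 < 1 / (((j : ℕ) : ℝ) + 1) := by positivity
        have h4 : 1 / (((jstar : ℕ) : ℝ) + 1) ≤ 1 := by
          rw [div_le_one hjpos]; linarith
        nlinarith
  · intro hall j hj
    rw [hipj j hj, hip0]
    have h1 : (1:ℝ) ≤ ((nposF : ℝ) - (posF j : ℝ)) ^ 2 := by
      have hpj := hall j hj
      have hne0 : nposF - posF j ≠ 0 := sub_ne_zero.mpr (Ne.symm hpj)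
      have h2 : 1 ≤ (nposF - posF j) ^ 2 := by
        rcases hne0.lt_or_gt with h | h <;> nlinarith
      calc (1:ℝ) = ((1:ℤ):ℝ) := by norm_num
        _ ≤ (((nposF - posF j)^2 : ℤ) : ℝ) := by exact_mod_cast h2
        _ = ((nposF : ℝ) - (posF j : ℝ)) ^ 2 := by push_cast; ring
    have h3 : 0 < 1 / (((j : ℕ) : ℝ) + 1) := by positivity
    nlinarith
end

section
/- For all positive integers N and reals M with N·M ≥ 1, there exists a positive integer m with N ≤ m ≤ 3N·log₂(2NM/ln 2) such that m > N·log₂(e·m·M). -/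
/-!
Put `L = log₂ (2NM / ln 2)` and take for `m` the least integer above `2NL`. The inequality
`ln a ≤ ab - ln b - 1` with `a = mM`, `b = ln 2 / (2NM)` gives `ln (e m M) ≤ m ln 2 / (2N) + L ln 2`,
that is `N log₂ (e m M) ≤ m / 2 + NL < m`. Since `NM ≥ 1` forces `L > 1`, also `N < m ≤ 2NL + 1 ≤ 3NL`.
-/

open Real

lemma Real.log_le_mul_sub_log_sub_one {a b : ℝ} (ha : 0 < a) (hb : 0 < b) :
    log a ≤ a * b - log b - 1 := by
  have h := log_le_sub_one_of_pos (mul_pos ha hb)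
  rw [log_mul ha.ne' hb.ne'] at h
  linarith

lemma one_lt_logb_two_mul_div_log_two {x : ℝ} (hx : 1 ≤ x) : 1 < logb 2 (2 * x / log 2) := by
  have h2 : 2 < 2 * x / log 2 := by
    rw [lt_div_iff₀ (log_pos one_lt_two)]
    linarith [log_two_lt_d9]
  simpa using logb_lt_logb one_lt_two two_pos h2

lemma mul_logb_exp_mul_lt {N M m : ℝ} (hN : 0 < N) (hM : 0 < M) (hm : 0 < m)
    (hmL : 2 * N * logb 2 (2 * N * M / log 2) < m) :
    N * logb 2 (exp 1 * m * M) < m := by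
  have hlog2 : 0 < log 2 := log_pos one_lt_two
  set L := logb 2 (2 * N * M / log 2) with hL_def
  have hL : L * log 2 = -log (log 2 / (2 * N * M)) := by
    rw [← log_inv, inv_div, hL_def, logb, div_mul_cancel₀ _ hlog2.ne']
  have hmM := log_le_mul_sub_log_sub_one (mul_pos hm hM)
    (div_pos hlog2 (by positivity : 0 < 2 * N * M))
  have hprod : m * M * (log 2 / (2 * N * M)) = m * log 2 / (2 * N) := by
    field_simp
  have hexp : log (exp 1 * m * M) ≤ m * log 2 / (2 * N) + L * log 2 := by
    rw [mul_assoc, log_mul (exp_pos 1).ne' (by positivity), log_exp]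
    linarith
  rw [logb, mul_div_assoc', div_lt_iff₀ hlog2]
  calc N * log (exp 1 * m * M)
      ≤ N * (m * log 2 / (2 * N) + L * log 2) := mul_le_mul_of_nonneg_left hexp hN.le
    _ = m * log 2 / 2 + N * L * log 2 := by field_simp
    _ < m * log 2 / 2 + m / 2 * log 2 := by gcongr; linarith
    _ = m * log 2 := by ring

theorem exists_m_growth_to_vc_general (N : ℕ) (M : ℝ) (hNM : 1 ≤ N * M) :
    ∃ m : ℕ, 0 < m ∧ N ≤ m ∧
      (m : ℝ) ≤ 3 * N * Real.logb 2 (2 * N * M / Real.log 2) ∧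
      (N : ℝ) * Real.logb 2 (Real.exp 1 * m * M) < m := by
  have hNM_pos : 0 < (N : ℝ) * M := one_pos.trans_le hNM
  have hM : 0 < M := pos_of_mul_pos_right hNM_pos N.cast_nonneg
  have hN : 0 < (N : ℝ) := pos_of_mul_pos_left hNM_pos hM.le
  have hN1 : (1 : ℝ) ≤ N := by exact_mod_cast Nat.cast_pos.mp hN
  have hL := one_lt_logb_two_mul_div_log_two hNM
  rw [← mul_assoc] at hL
  set L := logb 2 (2 * N * M / log 2)
  obtain ⟨m, hlt, hle⟩ : ∃ m : ℕ, 2 * N * L < m ∧ (m : ℝ) ≤ 2 * N * L + 1 :=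
    ⟨⌊2 * N * L⌋₊ + 1, by exact_mod_cast Nat.lt_floor_add_one _,
      by push_cast; linarith [Nat.floor_le (by positivity : 0 ≤ 2 * N * L)]⟩
  have hNL : 1 < N * L := one_lt_mul_of_le_of_lt hN1 hL
  have hm : (0 : ℝ) < m := by linarith
  refine ⟨m, Nat.cast_pos.mp hm, ?_, by linarith, mul_logb_exp_mul_lt hN hM hm hlt⟩
  exact_mod_cast (show (N : ℝ) ≤ m by nlinarith)

/-- for all positive integers `N` and reals `M` with `N·M ≥ 1`,
there is a positive integer `m` with `N ≤ m ≤ 3N·log₂(2NM/ln 2)` such that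
`m > N·log₂(e·m·M)`. -/
theorem exists_m_growth_to_vc (N : ℕ) (M : ℝ) (hN : 0 < N) (hNM : 1 ≤ N * M) :
    ∃ m : ℕ, 0 < m ∧ N ≤ m ∧
      (m : ℝ) ≤ 3 * N * Real.logb 2 (2 * N * M / Real.log 2) ∧
      (N : ℝ) * Real.logb 2 (Real.exp 1 * m * M) < m :=
  exists_m_growth_to_vc_general N M hNM
end
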